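/- Let p ≥ 1 and let x_i (i ∈ ℤ) be a p-periodic sequence in a commutative ring. Writing X_j^{(n)} = P_n(x_j, x_{j+1}, …, x_{j+n−1}), the following identity holds for all l ≥ 1: X_0^{(lp−1)}·X_1^{(p−1)} = X_0^{(p−1)}·X_1^{(lp−1)}. -/

import Mathlib

/-!
`Pz x j n` is the top-left entry of the transfer matrix `M(x_{j+n-1}) ⋯ M(x_j)`, `M(t) = !![t, -1; 1, 0]`.
For a `p`-periodic sequence the transfer matrix over `l p` steps is the `l`-th power of the
monodromy `A` over one period. The two sides of the identity are the products of off-diagonal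
entries `(A ^ l)₁₀ A₀₁` and `A₁₀ (A ^ l)₀₁`, and these agree for any `2 × 2` matrix commuting
with `A`: compare the `(0, 0)` entries of `A B` and `B A`.
-/

/-- Generalized Chebyshev polynomial on the window `x j, x (j+1), …, x (j+n-1)`
of a bi-infinite sequence: `Pz x j n = P_n(x_j, …, x_{j+n−1})`. -/
def Pz {R : Type*} [CommRing R] (x : ℤ → R) (j : ℤ) : ℕ → R
  | 0 => 1
  | 1 => x j
  | (n + 2) => x (j + (n + 1)) * Pz x j (n + 1) - Pz x j n

theorem Commute.fin_two_apply_zero_one_mul_apply_one_zero {R : Type*} [CommRing R]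
    {A B : Matrix (Fin 2) (Fin 2) R} (h : Commute A B) :
    A 0 1 * B 1 0 = B 0 1 * A 1 0 := by
  have h00 := congrFun (congrFun h.eq 0) 0
  simp only [Matrix.mul_apply, Fin.sum_univ_two] at h00
  linear_combination h00

section TransferMatrix

variable {R : Type*} [CommRing R] (x : ℤ → R) (j : ℤ)

def transferMatrix : ℕ → Matrix (Fin 2) (Fin 2) R
  | 0 => 1
  | n + 1 => !![x (j + n), -1; 1, 0] * transferMatrix n

theorem transferMatrix_succ_apply_one (n : ℕ) (k : Fin 2) :
    transferMatrix x j (n + 1) 1 k = transferMatrix x j n 0 k := by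
  simp [transferMatrix, Matrix.mul_apply, Fin.sum_univ_two]

theorem transferMatrix_add_two_apply_zero (n : ℕ) (k : Fin 2) :
    transferMatrix x j (n + 2) 0 k =
      x (j + (n + 1)) * transferMatrix x j (n + 1) 0 k - transferMatrix x j n 0 k := by
  rw [transferMatrix, Matrix.mul_apply, Fin.sum_univ_two, transferMatrix_succ_apply_one]
  simp [sub_eq_add_neg]

theorem transferMatrix_apply_zero_zero (n : ℕ) : transferMatrix x j n 0 0 = Pz x j n := by
  induction n using Nat.twoStepInduction with
  | zero => rfl
  | one => simp [transferMatrix, Pz]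
  | more n ih₀ ih₁ => rw [transferMatrix_add_two_apply_zero, ih₀, ih₁, Pz]

theorem transferMatrix_succ_apply_zero_one (n : ℕ) :
    transferMatrix x j (n + 1) 0 1 = -Pz x (j + 1) n := by
  induction n using Nat.twoStepInduction with
  | zero => simp [transferMatrix, Pz]
  | one => simp [transferMatrix, Pz, Matrix.mul_apply, Fin.sum_univ_two]
  | more n ih₀ ih₁ =>
    have hidx : j + ((n + 1 : ℕ) + 1 : ℤ) = j + 1 + (n + 1) := by push_cast; ring
    rw [transferMatrix_add_two_apply_zero, ih₀, ih₁, Pz, hidx]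
    ring

theorem transferMatrix_apply_one_zero {n : ℕ} (hn : n ≠ 0) :
    transferMatrix x j n 1 0 = Pz x j (n - 1) := by
  obtain ⟨m, rfl⟩ := Nat.exists_eq_add_one_of_ne_zero hn
  rw [transferMatrix_succ_apply_one, transferMatrix_apply_zero_zero, Nat.add_sub_cancel]

theorem transferMatrix_apply_zero_one {n : ℕ} (hn : n ≠ 0) :
    transferMatrix x j n 0 1 = -Pz x (j + 1) (n - 1) := by
  obtain ⟨m, rfl⟩ := Nat.exists_eq_add_one_of_ne_zero hn
  rw [transferMatrix_succ_apply_zero_one, Nat.add_sub_cancel]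

theorem transferMatrix_add (m n : ℕ) :
    transferMatrix x j (m + n) = transferMatrix x (j + m) n * transferMatrix x j m := by
  induction n with
  | zero => simp [transferMatrix]
  | succ n ih =>
    rw [← add_assoc, transferMatrix, transferMatrix, ih, mul_assoc]
    push_cast
    rw [add_assoc]

variable {x}

theorem transferMatrix_add_period {c : ℤ} (hx : Function.Periodic x c) (n : ℕ) :
    transferMatrix x (j + c) n = transferMatrix x j n := by
  induction n with
  | zero => rfl
  | succ n ih => rw [transferMatrix, transferMatrix, ih, add_right_comm, hx]

theorem transferMatrix_mul_eq_pow {p : ℕ} (hx : Function.Periodic x p) (l : ℕ) :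
    transferMatrix x j (l * p) = transferMatrix x j p ^ l := by
  induction l with
  | zero => simp [transferMatrix]
  | succ l ih =>
    rw [Nat.succ_mul, add_comm, transferMatrix_add, transferMatrix_add_period j hx, ih, pow_succ]

end TransferMatrix

/-- The key identity: for a `p`-periodic sequence,
`X_0^{(lp−1)} · X_1^{(p−1)} = X_0^{(p−1)} · X_1^{(lp−1)}`. -/
theorem key_identity {R : Type*} [CommRing R]
    (p : ℕ) (hp : 1 ≤ p) (x : ℤ → R) (hper : ∀ i : ℤ, x (i + p) = x i)
    (l : ℕ) (hl : 1 ≤ l) :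
    Pz x 0 (l * p - 1) * Pz x 1 (p - 1) = Pz x 0 (p - 1) * Pz x 1 (l * p - 1) := by
  have hp₀ : p ≠ 0 := by omega
  have hlp₀ : l * p ≠ 0 := Nat.mul_ne_zero (by omega) hp₀
  have key := (Commute.self_pow (transferMatrix x 0 p) l).fin_two_apply_zero_one_mul_apply_one_zero
  rw [← transferMatrix_mul_eq_pow 0 hper, transferMatrix_apply_zero_one _ _ hp₀,
    transferMatrix_apply_zero_one _ _ hlp₀, transferMatrix_apply_one_zero _ _ hp₀,
    transferMatrix_apply_one_zero _ _ hlp₀, zero_add] at key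
  linear_combination -key
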